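/- Under the hypotheses of the SGD descent lemma with constant learning rate η_t = η ∈ (0, 2/L̄) and constant batch size b_t = b, for all T ≥ 1: min_{0≤t≤T−1} E‖∇f(θ_t)‖² ≤ (2(f(θ₀) − f̲*)/(2 − L̄η))·(1/(ηT)) + (L̄σ²/(2 − L̄η))·(η/b). Consequently, limsup_{T→∞} min_{0≤t≤T−1} E‖∇f(θ_t)‖² ≤ L̄σ²η/((2 − L̄η)b). -/

import Mathlib

open MeasureTheory Filter

section helpers

variable {E : Type*} [NormedAddCommGroup E] [InnerProductSpace ℝ E] [CompleteSpace E]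

lemma fderiv_eq_inner_gradient (f : E → ℝ) (z v : E) :
    fderiv ℝ f z v = (inner ℝ (gradient f z) v : ℝ) := by
  rw [gradient, InnerProductSpace.toDual_symm_apply]

lemma abs_descent (f : E → ℝ) (L : NNReal) (hdiff : Differentiable ℝ f)
    (hlip : LipschitzWith L (gradient f)) (x y : E) :
    |f y - f x - (inner ℝ (gradient f x) (y - x) : ℝ)| ≤ (L : ℝ) / 2 * ‖y - x‖ ^ 2 := by
  set v := y - x with hv
  have hgradcont : Continuous (gradient f) := hlip.continuous
  have hc : ∀ s : ℝ, HasDerivAt (fun s : ℝ => f (x + s • v))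
      (inner ℝ (gradient f (x + s • v)) v : ℝ) s := by
    intro s
    have h1 : HasDerivAt (fun s : ℝ => x + s • v) v s := by
      simpa using ((hasDerivAt_id s).smul_const v).const_add x
    have h2 := ((hdiff (x + s • v)).hasFDerivAt).comp_hasDerivAt s h1
    rw [fderiv_eq_inner_gradient] at h2
    exact h2
  have hcont : Continuous fun s : ℝ => (inner ℝ (gradient f (x + s • v)) v : ℝ) := by
    exact (hgradcont.comp (by continuity)).inner continuous_const
  have hFTC : ∫ s in (0:ℝ)..1, (inner ℝ (gradient f (x + s • v)) v : ℝ) = f (x + v) - f x := by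
    have := intervalIntegral.integral_eq_sub_of_hasDerivAt (f := fun s : ℝ => f (x + s • v))
      (fun s _ => hc s) (hcont.intervalIntegrable 0 1)
    simpa using this
  have hxy : f y - f x - (inner ℝ (gradient f x) v : ℝ)
      = ∫ s in (0:ℝ)..1, ((inner ℝ (gradient f (x + s • v)) v : ℝ) - inner ℝ (gradient f x) v) := by
    rw [intervalIntegral.integral_sub (hcont.intervalIntegrable 0 1)
      (intervalIntegrable_const), hFTC]
    simp [hv]
  rw [hxy]
  have habs : |∫ s in (0:ℝ)..1, ((inner ℝ (gradient f (x + s • v)) v : ℝ) - inner ℝ (gradient f x) v)|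
      ≤ ∫ s in (0:ℝ)..1, (L : ℝ) * s * ‖v‖ ^ 2 := by
    refine (intervalIntegral.abs_integral_le_integral_abs (by norm_num)).trans ?_
    refine intervalIntegral.integral_mono_on (by norm_num)
      ((hcont.sub continuous_const).abs.intervalIntegrable 0 1) ?_ ?_
    · exact ((continuous_const.mul continuous_id).mul continuous_const).intervalIntegrable 0 1
    · intro s hs
      rw [Set.mem_Icc] at hs
      have h1 : ((inner ℝ (gradient f (x + s • v)) v : ℝ) - inner ℝ (gradient f x) v)
          = (inner ℝ (gradient f (x + s • v) - gradient f x) v : ℝ) := by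
        rw [inner_sub_left]
      rw [h1]
      refine (abs_real_inner_le_norm _ _).trans ?_
      have h2 : ‖gradient f (x + s • v) - gradient f x‖ ≤ (L : ℝ) * (s * ‖v‖) := by
        have := hlip.dist_le_mul (x + s • v) x
        rw [dist_eq_norm] at this
        simpa [norm_smul, abs_of_nonneg hs.1] using this
      calc ‖gradient f (x + s • v) - gradient f x‖ * ‖v‖
          ≤ ((L : ℝ) * (s * ‖v‖)) * ‖v‖ :=
            mul_le_mul_of_nonneg_right h2 (norm_nonneg _)
        _ = (L : ℝ) * s * ‖v‖ ^ 2 := by ring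
  refine habs.trans ?_
  rw [intervalIntegral.integral_mul_const, intervalIntegral.integral_const_mul, integral_id]
  apply le_of_eq
  ring

lemma descent_le (f : E → ℝ) (L : NNReal) (hdiff : Differentiable ℝ f)
    (hlip : LipschitzWith L (gradient f)) (x y : E) :
    f y ≤ f x + (inner ℝ (gradient f x) (y - x) : ℝ) + (L : ℝ) / 2 * ‖y - x‖ ^ 2 := by
  have := abs_le.mp (abs_descent f L hdiff hlip x y)
  linarith [this.2]

lemma memLp_inner_integrable {Ω : Type*} {m0 : MeasurableSpace Ω} {μ : Measure Ω}
    {f g : Ω → E} (hf : MemLp f 2 μ) (hg : MemLp g 2 μ) :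
    Integrable (fun ω => (inner ℝ (f ω) (g ω) : ℝ)) μ := by
  have h := MeasureTheory.L2.integrable_inner (𝕜 := ℝ) (hf.toLp f) (hg.toLp g)
  refine h.congr ?_
  filter_upwards [hf.coeFn_toLp, hg.coeFn_toLp] with ω h1 h2
  rw [h1, h2]

lemma condexp_clm {Ω : Type*} {m m0 : MeasurableSpace Ω} {μ : Measure Ω} [IsFiniteMeasure μ]
    (hm : m ≤ m0) {F : Type*}
    [NormedAddCommGroup F] [NormedSpace ℝ F] [CompleteSpace F]
    (L : E →L[ℝ] F) {g : Ω → E} (hg : Integrable g μ) :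
    μ[fun ω => L (g ω)|m] =ᵐ[μ] fun ω => L ((μ[g|m]) ω) := by
  haveI : SigmaFinite (μ.trim hm) := sigmaFiniteTrim_mono _ le_rfl
  refine (ae_eq_condExp_of_forall_setIntegral_eq hm (L.integrable_comp hg)
    (fun s _ _ => (L.integrable_comp integrable_condExp).integrableOn)
    (fun s hs hμs => ?_) ?_).symm
  · rw [L.integral_comp_comm integrable_condExp.integrableOn,
      L.integral_comp_comm hg.integrableOn, setIntegral_condExp hm hg hs]
  · exact (L.continuous.comp_stronglyMeasurable (stronglyMeasurable_condExp (m := m) (μ := μ) (f := g))).aestronglyMeasurable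

lemma coord_abs_le_norm {d : ℕ} (x : EuclideanSpace ℝ (Fin d)) (i : Fin d) : |x i| ≤ ‖x‖ := by
  rw [EuclideanSpace.norm_eq]
  have h : |x i| ^ 2 ≤ ∑ j, ‖x j‖ ^ 2 := by
    have := Finset.single_le_sum (f := fun j => ‖x j‖ ^ 2) (fun j _ => sq_nonneg _)
      (Finset.mem_univ i)
    simpa [Real.norm_eq_abs] using this
  calc |x i| = Real.sqrt (|x i| ^ 2) := by rw [Real.sqrt_sq (abs_nonneg _)]
    _ ≤ _ := Real.sqrt_le_sqrt h

end helpers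

set_option maxHeartbeats 1000000 in
theorem stmt_16 {Ω : Type*} {m0 : MeasurableSpace Ω} (μ : Measure Ω) [IsProbabilityMeasure μ]
    {d : ℕ} (f : EuclideanSpace ℝ (Fin d) → ℝ) (Lb : NNReal) (hLb : 0 < (Lb : ℝ))
    (hdiff : Differentiable ℝ f) (hlip : LipschitzWith Lb (gradient f))
    (fstar : ℝ) (hbound : ∀ θ, fstar ≤ f θ)
    (ℱ : Filtration ℕ m0)
    (θ : ℕ → Ω → EuclideanSpace ℝ (Fin d)) (g : ℕ → Ω → EuclideanSpace ℝ (Fin d))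
    (θ₀ : EuclideanSpace ℝ (Fin d)) (hθ0 : θ 0 = fun _ => θ₀)
    (η : ℝ) (hη0 : 0 < η) (hη2 : η < 2 / (Lb : ℝ))
    (b : ℝ) (hb : 0 < b) (σ : ℝ)
    (hupdate : ∀ t ω, θ (t + 1) ω = θ t ω - η • g t ω)
    (hadapted : ∀ t, StronglyMeasurable[ℱ t] (θ t))
    (hgint : ∀ t, Integrable (g t) μ)
    (hvint : ∀ t, Integrable (fun ω => ‖g t ω - gradient f (θ t ω)‖ ^ 2) μ)
    (hunbiased : ∀ t, μ[g t | ℱ t] =ᵐ[μ] fun ω => gradient f (θ t ω))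
    (hvar : ∀ t, ∀ᵐ ω ∂μ,
      (μ[fun ω' => ‖g t ω' - gradient f (θ t ω')‖ ^ 2 | ℱ t]) ω ≤ σ ^ 2 / b) :
    (∀ T : ℕ, 1 ≤ T →
      (⨅ t : Fin T, ∫ ω, ‖gradient f (θ t ω)‖ ^ 2 ∂μ)
        ≤ 2 * (f θ₀ - fstar) / (2 - Lb * η) * (1 / (η * T))
          + (Lb : ℝ) * σ ^ 2 / (2 - Lb * η) * (η / b))
    ∧ limsup (fun T : ℕ => ⨅ t : Fin T, ∫ ω, ‖gradient f (θ t ω)‖ ^ 2 ∂μ) atTop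
        ≤ (Lb : ℝ) * σ ^ 2 * η / ((2 - Lb * η) * b) := by
  classical
  haveI : ∀ t, SigmaFinite (μ.trim (ℱ.le t)) := fun t => sigmaFiniteTrim_mono _ le_rfl
  set G : ℕ → Ω → EuclideanSpace ℝ (Fin d) := fun t ω => gradient f (θ t ω) with hG
  have hvint' : ∀ t, Integrable (fun ω => ‖g t ω - G t ω‖ ^ 2) μ := hvint
  -- measurability
  have hGsm : ∀ t, StronglyMeasurable[ℱ t] (G t) :=
    fun t => hlip.continuous.comp_stronglyMeasurable (hadapted t)
  have hθm : ∀ t, AEStronglyMeasurable (θ t) μ :=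
    fun t => ((hadapted t).mono (ℱ.le t)).aestronglyMeasurable
  have hGm : ∀ t, AEStronglyMeasurable (G t) μ :=
    fun t => ((hGsm t).mono (ℱ.le t)).aestronglyMeasurable
  have hgm : ∀ t, AEStronglyMeasurable (g t) μ := fun t => (hgint t).1
  have hhm : ∀ t, AEStronglyMeasurable (fun ω => g t ω - G t ω) μ :=
    fun t => (hgm t).sub (hGm t)
  -- L² facts
  have hhL2 : ∀ t, MemLp (fun ω => g t ω - G t ω) 2 μ :=
    fun t => (memLp_two_iff_integrable_sq_norm (hhm t)).mpr (hvint t)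
  have hGL2aux : ∀ t, MemLp (θ t) 2 μ → MemLp (G t) 2 μ := by
    intro t ht
    have hbd : MemLp (fun ω => (Lb : ℝ) * ‖θ t ω‖ + ‖gradient f 0‖) 2 μ :=
      (ht.norm.const_mul _).add (memLp_const _)
    refine hbd.of_le (hGm t) ?_
    filter_upwards with ω
    have h1 : ‖gradient f (θ t ω) - gradient f 0‖ ≤ (Lb : ℝ) * ‖θ t ω‖ := by
      have := hlip.dist_le_mul (θ t ω) 0
      simpa [dist_eq_norm] using this
    have h3 := norm_add_le (gradient f (θ t ω) - gradient f 0) (gradient f 0)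
    rw [sub_add_cancel] at h3
    have h4 : ‖G t ω‖ ≤ (Lb : ℝ) * ‖θ t ω‖ + ‖gradient f 0‖ := by
      simp only [hG]; exact h3.trans (by linarith)
    rw [Real.norm_eq_abs (((Lb : ℝ)) * ‖θ t ω‖ + ‖gradient f 0‖)]
    exact h4.trans (le_abs_self _)
  have hθL2 : ∀ t, MemLp (θ t) 2 μ := by
    intro t; induction t with
    | zero => rw [hθ0]; exact memLp_const θ₀
    | succ t ih =>
      have hg2 : MemLp (g t) 2 μ := by
        have hgd : g t = (fun ω => g t ω - G t ω) + G t := by funext ω; simp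
        rw [hgd]
        exact (hhL2 t).add (hGL2aux t ih)
      have heq : θ (t + 1) = fun ω => θ t ω - η • g t ω := funext (hupdate t)
      rw [heq]
      exact ih.sub (hg2.const_smul η)
  have hGL2 : ∀ t, MemLp (G t) 2 μ := fun t => hGL2aux t (hθL2 t)
  have hgL2 : ∀ t, MemLp (g t) 2 μ := by
    intro t
    have hgd : g t = (fun ω => g t ω - G t ω) + G t := by funext ω; simp
    rw [hgd]
    exact (hhL2 t).add (hGL2 t)
  -- integrability
  have intG : ∀ t, Integrable (G t) μ := fun t => (hGL2 t).integrable one_le_two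
  have intGsq : ∀ t, Integrable (fun ω => ‖G t ω‖ ^ 2) μ :=
    fun t => (memLp_two_iff_integrable_sq_norm (hGm t)).mp (hGL2 t)
  have intInnerGh : ∀ t, Integrable (fun ω => (inner ℝ (G t ω) (g t ω - G t ω) : ℝ)) μ :=
    fun t => memLp_inner_integrable (hGL2 t) (hhL2 t)
  have intInnerGg : ∀ t, Integrable (fun ω => (inner ℝ (G t ω) (g t ω) : ℝ)) μ :=
    fun t => memLp_inner_integrable (hGL2 t) (hgL2 t)
  have intgsq : ∀ t, Integrable (fun ω => ‖g t ω‖ ^ 2) μ :=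
    fun t => (memLp_two_iff_integrable_sq_norm (hgm t)).mp (hgL2 t)
  have intF : ∀ t, Integrable (fun ω => f (θ t ω)) μ := by
    intro t
    have hθ2 : MemLp (fun ω => θ t ω - θ₀) 2 μ := (hθL2 t).sub (memLp_const θ₀)
    have hB : Integrable (fun ω => |f θ₀| + ‖gradient f θ₀‖ * ‖θ t ω - θ₀‖
        + (Lb : ℝ) / 2 * ‖θ t ω - θ₀‖ ^ 2) μ := by
      refine ((integrable_const _).add ((hθ2.integrable one_le_two).norm.const_mul _)).add ?_
      exact ((memLp_two_iff_integrable_sq_norm hθ2.1).mp hθ2).const_mul _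
    refine Integrable.mono' hB (hdiff.continuous.comp_aestronglyMeasurable (hθm t)) ?_
    filter_upwards with ω
    have hd := abs_le.mp (abs_descent f Lb hdiff hlip θ₀ (θ t ω))
    have hI : |(inner ℝ (gradient f θ₀) (θ t ω - θ₀) : ℝ)| ≤ ‖gradient f θ₀‖ * ‖θ t ω - θ₀‖ :=
      abs_real_inner_le_norm _ _
    rw [Real.norm_eq_abs]
    rcases abs_le.mp hI with ⟨hI1, hI2⟩
    rw [abs_le]
    constructor
    · nlinarith [neg_abs_le (f θ₀), hd.1]
    · nlinarith [le_abs_self (f θ₀), hd.2]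
  -- σ²/b bound on variance integral
  have hVar : ∀ t, ∫ ω, ‖g t ω - G t ω‖ ^ 2 ∂μ ≤ σ ^ 2 / b := by
    intro t
    have h1 : ∫ ω, ‖g t ω - G t ω‖ ^ 2 ∂μ
        = ∫ ω, (μ[fun ω' => ‖g t ω' - G t ω'‖ ^ 2|ℱ t]) ω ∂μ :=
      (integral_condExp (ℱ.le t)).symm
    rw [h1]
    calc ∫ ω, (μ[fun ω' => ‖g t ω' - G t ω'‖ ^ 2|ℱ t]) ω ∂μ
        ≤ ∫ _ω, σ ^ 2 / b ∂μ :=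
          integral_mono_ae integrable_condExp (integrable_const _) (hvar t)
      _ = σ ^ 2 / b := by simp
  -- cross term vanishes
  have hcondh0 : ∀ t, μ[g t - G t|ℱ t] =ᵐ[μ] 0 := by
    intro t
    have h1 := condExp_sub (m := ℱ t) (hgint t) (intG t)
    have h2 : μ[G t|ℱ t] = G t := condExp_of_stronglyMeasurable (ℱ.le t) (hGsm t) (intG t)
    filter_upwards [h1, hunbiased t] with ω h1ω h3ω
    simp only [Pi.sub_apply] at h1ω
    rw [h1ω, h2, h3ω]
    simp [hG]
  have hcross : ∀ t, ∫ ω, (inner ℝ (G t ω) (g t ω - G t ω) : ℝ) ∂μ = 0 := by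
    intro t
    have hGi : ∀ i : Fin d, MemLp (fun ω => G t ω i) 2 μ := by
      intro i
      refine (hGL2 t).norm.of_le ((EuclideanSpace.proj i).continuous.comp_aestronglyMeasurable
        (hGm t)) ?_
      filter_upwards with ω
      rw [Real.norm_eq_abs, norm_norm]
      exact coord_abs_le_norm _ i
    have hhi : ∀ i : Fin d, MemLp (fun ω => (g t ω - G t ω) i) 2 μ := by
      intro i
      refine (hhL2 t).norm.of_le ((EuclideanSpace.proj i).continuous.comp_aestronglyMeasurable
        (hhm t)) ?_
      filter_upwards with ω
      rw [Real.norm_eq_abs, norm_norm]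
      exact coord_abs_le_norm _ i
    have hprodint : ∀ i : Fin d,
        Integrable (fun ω => G t ω i * (g t ω - G t ω) i) μ := by
      intro i
      have := memLp_inner_integrable (E := ℝ) (hGi i) (hhi i)
      simpa [RCLike.inner_apply, mul_comm] using this
    have hinner_eq : (fun ω => (inner ℝ (G t ω) (g t ω - G t ω) : ℝ))
        = fun ω => ∑ i, G t ω i * (g t ω - G t ω) i := by
      funext ω
      rw [PiLp.inner_apply]
      simp [RCLike.inner_apply, mul_comm]
    rw [hinner_eq, integral_finset_sum _ (fun i _ => hprodint i)]
    refine Finset.sum_eq_zero fun i _ => ?_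
    -- each coordinate gives zero
    have hGism : StronglyMeasurable[ℱ t] (fun ω => G t ω i) :=
      (EuclideanSpace.proj i).continuous.comp_stronglyMeasurable (hGsm t)
    have hhint : Integrable (fun ω => (g t ω - G t ω) i) μ := (hhi i).integrable one_le_two
    have hpull := condExp_mul_of_stronglyMeasurable_left (m := ℱ t) (μ := μ) hGism
      (by exact hprodint i) hhint
    have hci : μ[fun ω => (g t ω - G t ω) i|ℱ t] =ᵐ[μ] 0 := by
      have h1 := condexp_clm (μ := μ) (ℱ.le t) (EuclideanSpace.proj i)
        ((hgint t).sub (intG t))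
      have h2 : (fun ω => (EuclideanSpace.proj i) ((g t - G t) ω))
          = fun ω => (g t ω - G t ω) i := by
        funext ω; simp
      rw [h2] at h1
      refine h1.trans ?_
      filter_upwards [hcondh0 t] with ω hω
      rw [hω]
      simp
    have hzero : μ[(fun ω => G t ω i) * fun ω => (g t ω - G t ω) i|ℱ t] =ᵐ[μ] 0 := by
      refine hpull.trans ?_
      filter_upwards [hci] with ω hω
      simp only [Pi.mul_apply, Pi.zero_apply, hω, mul_zero]
    have h3 : ∫ ω, G t ω i * (g t ω - G t ω) i ∂μ
        = ∫ ω, (μ[(fun ω => G t ω i) * fun ω => (g t ω - G t ω) i|ℱ t]) ω ∂μ := by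
      rw [integral_condExp (ℱ.le t)]
      rfl
    rw [h3, integral_congr_ae hzero]
    simp
  -- expectation identities
  have hEinner : ∀ t, ∫ ω, (inner ℝ (G t ω) (g t ω) : ℝ) ∂μ = ∫ ω, ‖G t ω‖ ^ 2 ∂μ := by
    intro t
    have hpt : (fun ω => (inner ℝ (G t ω) (g t ω) : ℝ))
        = fun ω => ‖G t ω‖ ^ 2 + (inner ℝ (G t ω) (g t ω - G t ω) : ℝ) := by
      funext ω
      rw [← real_inner_self_eq_norm_sq, ← inner_add_right]
      rw [add_sub_cancel]
    rw [hpt, integral_add (intGsq t) (intInnerGh t), hcross t, add_zero]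
  have hEgsq : ∀ t, ∫ ω, ‖g t ω‖ ^ 2 ∂μ
      = ∫ ω, ‖G t ω‖ ^ 2 ∂μ + ∫ ω, ‖g t ω - G t ω‖ ^ 2 ∂μ := by
    intro t
    have hpt : (fun ω => ‖g t ω‖ ^ 2)
        = fun ω => (‖G t ω‖ ^ 2 + 2 * (inner ℝ (G t ω) (g t ω - G t ω) : ℝ))
          + ‖g t ω - G t ω‖ ^ 2 := by
      funext ω
      have := norm_add_sq_real (G t ω) (g t ω - G t ω)
      rw [add_sub_cancel] at this
      rw [this]
    have int1 : Integrable (fun ω => 2 * (inner ℝ (G t ω) (g t ω - G t ω) : ℝ)) μ :=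
      (intInnerGh t).const_mul 2
    have int2 : Integrable (fun ω => ‖G t ω‖ ^ 2 + 2 * (inner ℝ (G t ω) (g t ω - G t ω) : ℝ)) μ :=
      (intGsq t).add int1
    rw [hpt, integral_add int2 (hvint' t), integral_add (intGsq t) int1,
      integral_const_mul _ _, hcross t]
    ring
  -- per-step descent in expectation
  set I : ℕ → ℝ := fun t => ∫ ω, ‖G t ω‖ ^ 2 ∂μ with hI
  set Φ : ℕ → ℝ := fun t => ∫ ω, f (θ t ω) ∂μ with hΦ
  set c : ℝ := η - (Lb : ℝ) * η ^ 2 / 2 with hc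
  set K : ℝ := (Lb : ℝ) * η ^ 2 / 2 * (σ ^ 2 / b) with hK
  have hLη2 : (Lb : ℝ) * η < 2 := by
    rw [lt_div_iff₀ hLb] at hη2
    linarith [hη2]
  have hcpos : 0 < c := by
    rw [hc]
    nlinarith
  have step : ∀ t, Φ (t + 1) ≤ Φ t - c * I t + K := by
    intro t
    have hpw : ∀ ω, f (θ (t + 1) ω) ≤ f (θ t ω) - η * (inner ℝ (G t ω) (g t ω) : ℝ)
        + (Lb : ℝ) / 2 * η ^ 2 * ‖g t ω‖ ^ 2 := by
      intro ω
      have hd := descent_le f Lb hdiff hlip (θ t ω) (θ (t + 1) ω)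
      have hyx : θ (t + 1) ω - θ t ω = -η • g t ω := by
        rw [hupdate t ω, sub_sub_cancel_left, neg_smul]
      rw [hyx] at hd
      have e1 : (inner ℝ (gradient f (θ t ω)) ((-η) • g t ω) : ℝ)
          = -η * (inner ℝ (G t ω) (g t ω) : ℝ) := by
        rw [real_inner_smul_right]
      have e2 : ‖(-η) • g t ω‖ ^ 2 = η ^ 2 * ‖g t ω‖ ^ 2 := by
        rw [norm_smul]
        simp [mul_pow, sq_abs]
      rw [e1, e2] at hd
      calc f (θ (t + 1) ω) ≤ f (θ t ω) + -η * (inner ℝ (G t ω) (g t ω) : ℝ)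
            + (Lb : ℝ) / 2 * (η ^ 2 * ‖g t ω‖ ^ 2) := hd
        _ = f (θ t ω) - η * (inner ℝ (G t ω) (g t ω) : ℝ)
            + (Lb : ℝ) / 2 * η ^ 2 * ‖g t ω‖ ^ 2 := by ring
    have hint : Φ (t + 1) ≤ ∫ ω, (f (θ t ω) - η * (inner ℝ (G t ω) (g t ω) : ℝ)
        + (Lb : ℝ) / 2 * η ^ 2 * ‖g t ω‖ ^ 2) ∂μ := by
      refine integral_mono (intF (t + 1)) ?_ hpw
      exact ((intF t).sub ((intInnerGg t).const_mul η)).add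
        ((intgsq t).const_mul ((Lb : ℝ) / 2 * η ^ 2))
    have int3 : Integrable (fun ω => η * (inner ℝ (G t ω) (g t ω) : ℝ)) μ :=
      (intInnerGg t).const_mul η
    have int4 : Integrable (fun ω => f (θ t ω) - η * (inner ℝ (G t ω) (g t ω) : ℝ)) μ :=
      (intF t).sub int3
    have int5 : Integrable (fun ω => (Lb : ℝ) / 2 * η ^ 2 * ‖g t ω‖ ^ 2) μ :=
      (intgsq t).const_mul _
    rw [integral_add int4 int5, integral_sub (intF t) int3, integral_const_mul _ _,
      integral_const_mul _ _, hEinner t, hEgsq t] at hint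
    have hv := hVar t
    have hnn : (0:ℝ) ≤ (Lb : ℝ) / 2 * η ^ 2 := by positivity
    have : Φ (t + 1) ≤ Φ t - η * I t + (Lb : ℝ) / 2 * η ^ 2 * (I t + σ ^ 2 / b) := by
      refine hint.trans ?_
      have := mul_le_mul_of_nonneg_left (add_le_add_left hv (I t)) hnn
      simp only [hΦ, hI]
      linarith
    rw [hc, hK]
    calc Φ (t + 1) ≤ Φ t - η * I t + (Lb : ℝ) / 2 * η ^ 2 * (I t + σ ^ 2 / b) := this
      _ = Φ t - (η - (Lb : ℝ) * η ^ 2 / 2) * I t + (Lb : ℝ) * η ^ 2 / 2 * (σ ^ 2 / b) := by ring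
  -- telescoping
  have teles : ∀ T : ℕ, Φ T + c * ∑ t ∈ Finset.range T, I t ≤ Φ 0 + T * K := by
    intro T
    induction T with
    | zero => simp
    | succ T ih =>
      rw [Finset.sum_range_succ, mul_add]
      have h1 := step T
      push_cast
      linarith
  have hΦ0 : Φ 0 = f θ₀ := by
    rw [hΦ]
    simp only [hθ0]
    simp
  have hΦlb : ∀ T, fstar ≤ Φ T := by
    intro T
    rw [hΦ]
    calc fstar = ∫ _ω, fstar ∂μ := by simp
      _ ≤ _ := integral_mono (integrable_const _) (intF T) fun ω => hbound _
  have hsum : ∀ T : ℕ, c * ∑ t ∈ Finset.range T, I t ≤ (f θ₀ - fstar) + T * K := by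
    intro T
    have := teles T
    have := hΦlb T
    rw [hΦ0] at *
    linarith [teles T, hΦlb T]
  have hInonneg : ∀ t, 0 ≤ I t := fun t => integral_nonneg fun ω => sq_nonneg _
  -- part 1
  have part1 : ∀ T : ℕ, 1 ≤ T →
      (⨅ t : Fin T, ∫ ω, ‖gradient f (θ t ω)‖ ^ 2 ∂μ)
        ≤ 2 * (f θ₀ - fstar) / (2 - Lb * η) * (1 / (η * T))
          + (Lb : ℝ) * σ ^ 2 / (2 - Lb * η) * (η / b) := by
    intro T hT
    haveI : Nonempty (Fin T) := Fin.pos_iff_nonempty.mp hT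
    have hTpos : (0:ℝ) < T := by exact_mod_cast hT
    set m : ℝ := ⨅ t : Fin T, ∫ ω, ‖gradient f (θ t ω)‖ ^ 2 ∂μ with hm
    have hmle : ∀ i : Fin T, m ≤ I i := by
      intro i
      exact ciInf_le (Set.Finite.bddBelow (Set.finite_range _)) i
    have hTm : (T : ℝ) * m ≤ ∑ t ∈ Finset.range T, I t := by
      calc (T : ℝ) * m = ∑ _t ∈ Finset.range T, m := by
            rw [Finset.sum_const, Finset.card_range, nsmul_eq_mul]
        _ ≤ ∑ t ∈ Finset.range T, I t :=
            Finset.sum_le_sum fun t ht => hmle ⟨t, Finset.mem_range.mp ht⟩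
    have h1 : c * ((T : ℝ) * m) ≤ (f θ₀ - fstar) + T * K :=
      le_trans (mul_le_mul_of_nonneg_left hTm hcpos.le) (hsum T)
    have h2 : m ≤ ((f θ₀ - fstar) + T * K) / (c * T) := by
      rw [le_div_iff₀ (by positivity)]
      nlinarith
    refine h2.trans (le_of_eq ?_)
    have hne1 : (η:ℝ) ≠ 0 := hη0.ne'
    have hne2 : (T:ℝ) ≠ 0 := hTpos.ne'
    have hne3 : b ≠ 0 := hb.ne'
    have hne4 : (2:ℝ) - (Lb : ℝ) * η ≠ 0 := by nlinarith
    have hcT : (0:ℝ) < c * T := mul_pos hcpos hTpos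
    rw [div_eq_iff hcT.ne', hc, hK]
    field_simp
  refine ⟨part1, ?_⟩
  -- part 2
  set A : ℝ := 2 * (f θ₀ - fstar) / (2 - Lb * η) with hA
  set C : ℝ := (Lb : ℝ) * σ ^ 2 / (2 - Lb * η) * (η / b) with hCd
  have htend : Tendsto (fun T : ℕ => A * (1 / (η * T)) + C) atTop (nhds C) := by
    have h1 : Tendsto (fun T : ℕ => η * (T : ℝ)) atTop atTop :=
      (tendsto_natCast_atTop_atTop).const_mul_atTop hη0
    have h2 : Tendsto (fun T : ℕ => 1 / (η * (T : ℝ))) atTop (nhds 0) := by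
      have := h1.inv_tendsto_atTop
      rw [show (fun T : ℕ => η * (T:ℝ))⁻¹ = fun T : ℕ => 1 / (η * (T:ℝ)) by
        funext T; simp [one_div]] at this
      exact this
    have := (h2.const_mul A).add (tendsto_const_nhds (x := C))
    simpa using this
  have hev : ∀ᶠ T : ℕ in atTop, (⨅ t : Fin T, ∫ ω, ‖gradient f (θ t ω)‖ ^ 2 ∂μ)
      ≤ A * (1 / (η * T)) + C := by
    filter_upwards [eventually_ge_atTop 1] with T hT
    have := part1 T hT
    rw [hA, hCd]
    calc (⨅ t : Fin T, ∫ ω, ‖gradient f (θ t ω)‖ ^ 2 ∂μ)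
        ≤ 2 * (f θ₀ - fstar) / (2 - Lb * η) * (1 / (η * T))
          + (Lb : ℝ) * σ ^ 2 / (2 - Lb * η) * (η / b) := this
      _ = _ := by ring
  have hnonneg : ∀ T : ℕ, (0:ℝ) ≤ ⨅ t : Fin T, ∫ ω, ‖gradient f (θ t ω)‖ ^ 2 ∂μ :=
    fun T => Real.iInf_nonneg fun t => integral_nonneg fun ω => sq_nonneg _
  have hlim : limsup (fun T : ℕ => ⨅ t : Fin T, ∫ ω, ‖gradient f (θ t ω)‖ ^ 2 ∂μ) atTop ≤ C := by
    have h1 := limsup_le_limsup hev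
      (isCoboundedUnder_le_of_le atTop hnonneg)
      (htend.isBoundedUnder_le)
    rw [htend.limsup_eq] at h1
    exact h1
  refine hlim.trans (le_of_eq ?_)
  rw [hCd, div_mul_div_comm]
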